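/- arXiv:math/0703321 — 2 statements merged into one kernel-verified Lean document; each statement's English description precedes it below -/
import Mathlib

section
/- Let λ ≠ μ be real numbers and let δ be a self-adjoint endomorphism of V whose eigenspace for λ has dimension 2 and whose eigenspace for μ has dimension 5. Then there exists a Cayley triple (u, v, z) such that δ(u) = λ•u, δ(v) = λ•v, and δ(x) = μ•x for each x ∈ {uv, z, uz, vz, (uv)z}. -/
/-!
By a dimension count the `μ`-eigenspace of the symmetric map `δ` is the orthogonal complement of
its `λ`-eigenspace, so it suffices to take an orthonormal basis `u, v` of the `λ`-eigenspace,
complete it to a Cayley triple `(u, v, z)`, and check that `uv, z, uz, vz, (uv)z` are orthogonal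
to `u` and `v`. This follows from two identities of a vector product: `⟪xy, z⟫` is alternating
in `x, y, z`, and `u(uv) = -v` for orthonormal `u, v`.
-/

open scoped RealInnerProductSpace

open Module Module.End

section InnerProductSpace

variable {𝕜 E : Type*} [RCLike 𝕜] [NormedAddCommGroup E] [InnerProductSpace 𝕜 E]

theorem exists_norm_eq_one_forall_inner_eq_zero [FiniteDimensional 𝕜 E] {ι : Type*} [Fintype ι]
    (f : ι → E) (hι : Fintype.card ι < finrank 𝕜 E) : ∃ z : E, ‖z‖ = 1 ∧ ∀ i, inner 𝕜 (f i) z = 0 := by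
  set K := Submodule.span 𝕜 (Set.range f)
  have hK : finrank 𝕜 K + finrank 𝕜 Kᗮ = finrank 𝕜 E := K.finrank_add_finrank_orthogonal
  have hbot : Kᗮ ≠ ⊥ := by
    have : finrank 𝕜 K ≤ Fintype.card ι := finrank_range_le_card f
    rintro h
    rw [h, finrank_bot] at hK
    omega
  obtain ⟨y, hy, hy0⟩ := Submodule.exists_mem_ne_zero_of_ne_bot hbot
  exact ⟨(‖y‖⁻¹ : 𝕜) • y, norm_smul_inv_norm hy0,
    fun i => Kᗮ.smul_mem _ hy _ (Submodule.subset_span ⟨i, rfl⟩)⟩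

theorem LinearMap.IsSymmetric.eigenspace_eq_orthogonal_of_finrank_add_eq [FiniteDimensional 𝕜 E]
    {T : E →ₗ[𝕜] E} (hT : T.IsSymmetric) {μ ν : 𝕜} (hμν : μ ≠ ν)
    (h : finrank 𝕜 (eigenspace T μ) + finrank 𝕜 (eigenspace T ν) = finrank 𝕜 E) :
    eigenspace T ν = (eigenspace T μ)ᗮ :=
  Submodule.eq_of_le_of_finrank_eq (hT.orthogonalFamily_eigenspaces.isOrtho hμν.symm).le
    (by have := (eigenspace T μ).finrank_add_finrank_orthogonal; omega)

theorem Submodule.exists_orthonormal_pair_of_finrank_eq_two {K : Submodule 𝕜 E}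
    (hK : finrank 𝕜 K = 2) :
    ∃ u v : E, Orthonormal 𝕜 ![u, v] ∧ u ∈ K ∧ v ∈ K ∧
      ∀ x : E, inner 𝕜 x u = 0 → inner 𝕜 x v = 0 → x ∈ Kᗮ := by
  have : FiniteDimensional 𝕜 K := .of_finrank_eq_succ hK
  let b := (stdOrthonormalBasis 𝕜 K).reindex (finCongr hK)
  refine ⟨b 0, b 1, ?_, (b 0).2, (b 1).2, fun x hx0 hx1 => (K.mem_orthogonal' x).2 fun y hy => ?_⟩
  · convert b.orthonormal.comp_linearIsometry K.subtypeₗᵢ using 1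
    ext i; fin_cases i <;> rfl
  · change inner 𝕜 x ((⟨y, hy⟩ : K) : E) = 0
    rw [← b.sum_repr' ⟨y, hy⟩]
    simp [Fin.sum_univ_two, inner_add_right, inner_smul_right, hx0, hx1]

end InnerProductSpace

section VectorProduct

variable {V : Type*} [NormedAddCommGroup V] [InnerProductSpace ℝ V]

def IsCayleyTriple (π : V →ₗ[ℝ] V →ₗ[ℝ] V) (u v z : V) : Prop :=
  Orthonormal ℝ ![u, v, π u v, z]

structure IsVectorProduct (π : V →ₗ[ℝ] V →ₗ[ℝ] V) : Prop where
  isAlt : π.IsAlt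
  orthonormal : ∀ u v : V, Orthonormal ℝ ![u, v] → Orthonormal ℝ ![u, v, π u v]

namespace IsVectorProduct

variable {π : V →ₗ[ℝ] V →ₗ[ℝ] V}

theorem inner_apply_left_of_inner_eq_zero (hπ : IsVectorProduct π) {a b : V} (hab : ⟪a, b⟫ = 0) :
    ⟪π a b, a⟫ = 0 := by
  rcases eq_or_ne a 0 with rfl | ha
  · simp
  rcases eq_or_ne b 0 with rfl | hb
  · simp
  have hon : Orthonormal ℝ ![‖a‖⁻¹ • a, ‖b‖⁻¹ • b] := by
    simp [norm_smul, real_inner_smul_left, real_inner_smul_right, hab, ha, hb]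
  simpa [real_inner_smul_left, real_inner_smul_right, ha, hb] using
    (hπ.orthonormal _ _ hon).2 (show (2 : Fin 3) ≠ 0 by decide)

theorem inner_apply_left (hπ : IsVectorProduct π) (a b : V) : ⟪π a b, a⟫ = 0 := by
  -- replace `b` by its component orthogonal to `a`, which does not change `π a b`
  have hb : ⟪a, b - (ℝ ∙ a).starProjection b⟫ = 0 :=
    Submodule.mem_orthogonal_singleton_iff_inner_right.mp
      (Submodule.sub_starProjection_mem_orthogonal b)
  rw [Submodule.starProjection_singleton] at hb
  simpa [hπ.isAlt.self_eq_zero] using hπ.inner_apply_left_of_inner_eq_zero hb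

theorem inner_apply_right (hπ : IsVectorProduct π) (a b : V) : ⟪π a b, b⟫ = 0 := by
  rw [← hπ.isAlt.neg, inner_neg_left, hπ.inner_apply_left, neg_zero]

theorem inner_apply_swap (hπ : IsVectorProduct π) (a b c : V) :
    ⟪π a b, c⟫ = -⟪π a c, b⟫ := by
  have h := hπ.inner_apply_right a (b + c)
  simp only [map_add, inner_add_left, inner_add_right, hπ.inner_apply_right] at h
  linarith

theorem apply_apply_eq_neg (hπ : IsVectorProduct π) {u v : V} (h : Orthonormal ℝ ![u, v]) :
    π u (π u v) = -v := by
  have huvw := hπ.orthonormal u v h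
  simp only [orthonormal_vecCons_iff, Fin.forall_fin_succ, Matrix.cons_val_zero,
    Matrix.cons_val_succ] at huvw
  obtain ⟨hu, ⟨-, huw, -⟩, hv, -, hw, -⟩ := huvw
  have hx : ‖π u (π u v)‖ = 1 := by
    simpa using (hπ.orthonormal u (π u v) (by simp [hu, huw, hw])).1 2
  refine (inner_eq_neg_one_iff_of_norm_eq_one (𝕜 := ℝ) hx hv).mp ?_
  rw [hπ.inner_apply_swap, real_inner_self_eq_norm_sq, hw]
  norm_num

theorem exists_isCayleyTriple (hπ : IsVectorProduct π) [FiniteDimensional ℝ V]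
    (hV : 3 < finrank ℝ V) {u v : V} (h : Orthonormal ℝ ![u, v]) : ∃ z, IsCayleyTriple π u v z := by
  obtain ⟨z, hz, hperp⟩ :=
    exists_norm_eq_one_forall_inner_eq_zero ![u, v, π u v] (by simpa using hV)
  have huvw := hπ.orthonormal u v h
  refine ⟨z, ?_⟩
  simp_all [IsCayleyTriple, Fin.forall_fin_succ]

theorem inner_eq_zero_of_isCayleyTriple (hπ : IsVectorProduct π) {u v z : V}
    (h : IsCayleyTriple π u v z) :
    ∀ x ∈ ({π u v, z, π u z, π v z, π (π u v) z} : Set V), ⟪x, u⟫ = 0 ∧ ⟪x, v⟫ = 0 := by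
  simp only [IsCayleyTriple, orthonormal_vecCons_iff, Fin.forall_fin_succ, Matrix.cons_val_zero,
    Matrix.cons_val_succ, IsEmpty.forall_iff, and_true] at h
  obtain ⟨hu, ⟨huv, -, huz⟩, hv, ⟨-, hvz⟩, -, hwz, -⟩ := h
  have hwu : π (π u v) u = v := by
    rw [← hπ.isAlt.neg, hπ.apply_apply_eq_neg (by simp [hu, hv, huv]), neg_neg]
  have hwv : π (π u v) v = -u := by
    rw [← hπ.isAlt.neg, ← hπ.isAlt.neg v u, map_neg,
      hπ.apply_apply_eq_neg (by simp [hu, hv, real_inner_comm, huv]), neg_neg]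
  simp only [Set.mem_insert_iff, Set.mem_singleton_iff]
  rintro x (hx | hx | hx | hx | hx) <;> subst x
  · exact ⟨hπ.inner_apply_left u v, hπ.inner_apply_right u v⟩
  · exact ⟨real_inner_comm u z ▸ huz, real_inner_comm v z ▸ hvz⟩
  · exact ⟨hπ.inner_apply_left u z, by rw [hπ.inner_apply_swap, hwz, neg_zero]⟩
  · refine ⟨?_, hπ.inner_apply_left v z⟩
    rw [hπ.inner_apply_swap, ← hπ.isAlt.neg, inner_neg_left, hwz, neg_zero, neg_zero]
  · rw [hπ.inner_apply_swap, hwu, hπ.inner_apply_swap _ z v, hwv]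
    simp [huz, hvz]

end IsVectorProduct

end VectorProduct

theorem stmt8
    {V : Type*} [NormedAddCommGroup V] [InnerProductSpace ℝ V]
    [FiniteDimensional ℝ V] (hdim : Module.finrank ℝ V = 7)
    (π : V →ₗ[ℝ] V →ₗ[ℝ] V) (hπalt : ∀ x : V, π x x = 0)
    (hπvp : ∀ u v : V, Orthonormal ℝ ![u, v] → Orthonormal ℝ ![u, v, π u v])
    (lam μ : ℝ) (hlm : lam ≠ μ)
    (δ : V →ₗ[ℝ] V) (hδ : LinearMap.IsSymmetric δ)
    (h2 : Module.finrank ℝ (Module.End.eigenspace δ lam) = 2)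
    (h5 : Module.finrank ℝ (Module.End.eigenspace δ μ) = 5) :
    ∃ u v z : V, Orthonormal ℝ ![u, v, π u v, z] ∧
      δ u = lam • u ∧ δ v = lam • v ∧ δ (π u v) = μ • π u v ∧ δ z = μ • z ∧
      δ (π u z) = μ • π u z ∧ δ (π v z) = μ • π v z ∧
      δ (π (π u v) z) = μ • π (π u v) z := by
  have hπ : IsVectorProduct π := ⟨hπalt, hπvp⟩
  have hEμ : eigenspace δ μ = (eigenspace δ lam)ᗮ :=
    hδ.eigenspace_eq_orthogonal_of_finrank_add_eq hlm (by rw [h2, h5, hdim])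
  obtain ⟨u, v, huv, hu, hv, hperp⟩ :=
    (eigenspace δ lam).exists_orthonormal_pair_of_finrank_eq_two h2
  obtain ⟨z, hz⟩ := hπ.exists_isCayleyTriple (by omega) huv
  have hμ : ∀ x ∈ ({π u v, z, π u z, π v z, π (π u v) z} : Set V), δ x = μ • x := by
    intro x hx
    obtain ⟨hxu, hxv⟩ := hπ.inner_eq_zero_of_isCayleyTriple hz x hx
    rw [← mem_eigenspace_iff, hEμ]
    exact hperp x hxu hxv
  exact ⟨u, v, z, hz, mem_eigenspace_iff.mp hu, mem_eigenspace_iff.mp hv,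
    hμ _ (by simp), hμ _ (by simp), hμ _ (by simp), hμ _ (by simp), hμ _ (by simp)⟩
end

section
/- Let δ₁ and δ₂ be positive definite self-adjoint endomorphisms of V, and for i = 1, 2 define η_i : V × V → V by η_i(x, y) = δ_i(π(δ_i(x), δ_i(y))). Then there exists a linear isometry σ of V with σ(η₁(x, y)) = η₂(σ(x), σ(y)) for all x, y ∈ V if and only if there exists σ ∈ G₂ such that δ₁ = σ⁻¹ ∘ δ₂ ∘ σ. -/
/-!
If `σ (δ₁ π(δ₁ x, δ₁ y)) = δ₂ π(δ₂ σ x, δ₂ σ y)`, then `E = δ₂ σ δ₁⁻¹` preserves the three-form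
`⟪π a b, c⟫`. Such an `E` is orthogonal: let `R = (E* E)⁻¹` and let `uᵢ` be an orthonormal
eigenbasis of `R` with eigenvalues `μᵢ`. For each `i` the frame `uᵢ, π(uᵢ, uⱼ)` (`j ≠ i`) is again
orthonormal, and `R` is diagonal in it with entries `μᵢ` and `(μᵢ μⱼ)⁻¹`. Comparing the two
expressions for `det R` forces every `μᵢ = 1` as soon as the dimension exceeds `3`.
Now `δ₂ σ = E δ₁` with `σ, E` orthogonal, so `(σ⁻¹ δ₂ σ)² = δ₁²`, and uniqueness of positive square
roots gives `δ₁ = σ⁻¹ δ₂ σ`; cancelling `δ₂` and `δ₁` in the hypothesis then shows `σ ∈ G₂`.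
-/

open scoped RealInnerProductSpace
open Module

theorem eq_one_of_prod_eq_prod_ite {ι : Type*} [Fintype ι] [DecidableEq ι]
    (hι : 3 < Fintype.card ι) {μ : ι → ℝ} (hμ : ∀ i, 0 < μ i)
    (h : ∀ i, ∏ j, μ j = ∏ j, if j = i then μ i else (μ i * μ j)⁻¹) (i : ι) : μ i = 1 := by
  obtain ⟨m, hm⟩ : ∃ m, Fintype.card ι = m + 4 := ⟨_, (Nat.sub_add_cancel hι).symm⟩
  set P := ∏ j, μ j
  have hP : 0 < P := Finset.prod_pos fun j _ => hμ j
  have hpow : ∀ i, μ i ^ (m + 1) * P ^ 2 = 1 := by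
    intro i
    have hi := Finset.mem_univ i
    set Q := ∏ j ∈ Finset.univ.erase i, μ j
    have hPQ : μ i * Q = P := Finset.mul_prod_erase _ _ hi
    have hQ : 0 < Q := Finset.prod_pos fun j _ => hμ j
    have h1 : P = μ i * (μ i ^ (m + 3) * Q)⁻¹ := by
      rw [h i, ← Finset.mul_prod_erase _ _ hi, if_pos rfl,
        Finset.prod_congr rfl fun j hj => if_neg (Finset.ne_of_mem_erase hj),
        Finset.prod_inv_distrib, Finset.prod_mul_distrib, Finset.prod_const,
        Finset.card_erase_of_mem hi, Finset.card_univ, hm, show m + 4 - 1 = m + 3 by omega]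
    rw [← hPQ] at h1 ⊢
    have hμi := hμ i
    rw [eq_mul_inv_iff_mul_eq₀ (by positivity)] at h1
    have : μ i ^ (m + 3) * Q ^ 2 = 1 := by
      apply mul_left_cancel₀ hμi.ne'
      linear_combination h1
    linear_combination this
  have hP1 : P = 1 := by
    have := Finset.prod_congr rfl fun i (_ : i ∈ Finset.univ) => hpow i
    rw [Finset.prod_mul_distrib, Finset.prod_pow, Finset.prod_const, Finset.card_univ, hm,
      Finset.prod_const_one, ← pow_mul, ← pow_add] at this
    exact (pow_eq_one_iff_of_nonneg hP.le (by omega)).mp this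
  have := hpow i
  rw [hP1, one_pow, mul_one] at this
  exact (pow_eq_one_iff_of_nonneg (hμ i).le (by omega)).mp this

section

variable {V : Type*} [NormedAddCommGroup V] [InnerProductSpace ℝ V]

theorem exists_eq_smul_add_and_inner_eq_zero (x y : V) :
    ∃ (c : ℝ) (z : V), y = c • x + z ∧ ⟪x, z⟫ = 0 := by
  obtain ⟨a, ha, z, hz, rfl⟩ := (ℝ ∙ x).exists_add_mem_mem_orthogonal y
  obtain ⟨c, rfl⟩ := Submodule.mem_span_singleton.mp ha
  exact ⟨c, z, rfl, Submodule.mem_orthogonal_singleton_iff_inner_right.mp hz⟩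

theorem LinearMap.det_eq_prod_of_orthonormal {ι : Type*} [Fintype ι] [DecidableEq ι] [Nonempty ι]
    {v : ι → V} (hv : Orthonormal ℝ v) (hcard : Fintype.card ι = finrank ℝ V)
    (f : V →ₗ[ℝ] V) (ν : ι → ℝ) (h : ∀ i j, ⟪v i, f (v j)⟫ = if i = j then ν i else 0) :
    f.det = ∏ i, ν i := by
  let b := (basisOfOrthonormalOfCardEqFinrank hv hcard).toOrthonormalBasis (by simpa using hv)
  have hb : ⇑b = v := by simp [b]
  rw [← LinearMap.det_toMatrix b.toBasis, ← Matrix.det_diagonal]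
  congr 1
  ext i j
  rw [LinearMap.toMatrix_apply, OrthonormalBasis.coe_toBasis_repr_apply,
    OrthonormalBasis.coe_toBasis, b.repr_apply_apply, hb, h, Matrix.diagonal_apply]

structure IsVectorProduct_s19 (π : V →ₗ[ℝ] V →ₗ[ℝ] V) : Prop where
  isAlt : π.IsAlt
  orthonormal : ∀ u v : V, Orthonormal ℝ ![u, v] → Orthonormal ℝ ![u, v, π u v]

namespace IsVectorProduct_s19

variable {π : V →ₗ[ℝ] V →ₗ[ℝ] V} (hπ : IsVectorProduct_s19 π)
include hπ

theorem inner_apply_left_and_norm_apply_of_inner_eq_zero {x y : V} (hxy : ⟪x, y⟫ = 0) :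
    ⟪π x y, x⟫ = 0 ∧ ‖π x y‖ = ‖x‖ * ‖y‖ := by
  rcases eq_or_ne x 0 with rfl | hx
  · simp
  rcases eq_or_ne y 0 with rfl | hy
  · simp
  have hx' := norm_ne_zero_iff.mpr hx
  have hy' := norm_ne_zero_iff.mpr hy
  have hu : ‖‖x‖⁻¹ • x‖ = 1 := by rw [norm_smul, norm_inv, norm_norm, inv_mul_cancel₀ hx']
  have hv : ‖‖y‖⁻¹ • y‖ = 1 := by rw [norm_smul, norm_inv, norm_norm, inv_mul_cancel₀ hy']
  have huv : Orthonormal ℝ ![‖x‖⁻¹ • x, ‖y‖⁻¹ • y] := by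
    rw [orthonormal_iff_ite]
    intro i j
    fin_cases i <;> fin_cases j <;>
      simp [real_inner_smul_left, real_inner_smul_right, hxy, real_inner_comm x y, hu, hv]
  have h := hπ.orthonormal _ _ huv
  have hscale : π x y = (‖x‖ * ‖y‖) • π (‖x‖⁻¹ • x) (‖y‖⁻¹ • y) := by
    rw [map_smul, map_smul, LinearMap.smul_apply, smul_smul, smul_smul,
      show ‖x‖ * ‖y‖ * ‖y‖⁻¹ * ‖x‖⁻¹ = 1 by field_simp, one_smul]
  have hnorm : ‖π (‖x‖⁻¹ • x) (‖y‖⁻¹ • y)‖ = 1 := by simpa using h.1 2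
  have horth : ⟪π (‖x‖⁻¹ • x) (‖y‖⁻¹ • y), x⟫ = 0 := by
    simpa [real_inner_smul_right, hx'] using h.2 (show (2 : Fin 3) ≠ 0 by decide)
  constructor
  · rw [hscale, real_inner_smul_left, horth, mul_zero]
  · rw [hscale, norm_smul, hnorm, mul_one, Real.norm_of_nonneg (by positivity)]

theorem inner_apply_left_s19 (x y : V) : ⟪π x y, x⟫ = 0 := by
  obtain ⟨c, z, rfl, hz⟩ := exists_eq_smul_add_and_inner_eq_zero x y
  simpa [hπ.isAlt.self_eq_zero] using (hπ.inner_apply_left_and_norm_apply_of_inner_eq_zero hz).1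

theorem inner_apply_left' (x y : V) : ⟪x, π x y⟫ = 0 := by
  rw [real_inner_comm, hπ.inner_apply_left_s19]

theorem inner_apply_self (x y : V) : ⟪π x y, π x y⟫ = ⟪x, x⟫ * ⟪y, y⟫ - ⟪x, y⟫ ^ 2 := by
  obtain ⟨c, z, rfl, hz⟩ := exists_eq_smul_add_and_inner_eq_zero x y
  have h : ⟪π x z, π x z⟫ = ⟪x, x⟫ * ⟪z, z⟫ := by
    simp only [real_inner_self_eq_norm_sq,
      (hπ.inner_apply_left_and_norm_apply_of_inner_eq_zero hz).2, mul_pow]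
  simp only [map_add, map_smul, hπ.isAlt.self_eq_zero, smul_zero, zero_add, inner_add_left,
    inner_add_right, real_inner_smul_left, real_inner_smul_right, hz, real_inner_comm x z, h]
  ring

theorem inner_apply_apply (x y z : V) :
    ⟪π x y, π x z⟫ = ⟪x, x⟫ * ⟪y, z⟫ - ⟪x, y⟫ * ⟪x, z⟫ := by
  have h := hπ.inner_apply_self x (y + z)
  simp only [map_add, inner_add_left, inner_add_right, hπ.inner_apply_self,
    real_inner_comm y z, real_inner_comm (π x y) (π x z)] at h
  linarith

theorem orthonormal_ite {ι : Type*} [DecidableEq ι] {u : ι → V} (hu : Orthonormal ℝ u) (i : ι) :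
    Orthonormal ℝ fun j => if j = i then u i else π (u i) (u j) := by
  have hu' := orthonormal_iff_ite.mp hu
  rw [orthonormal_iff_ite]
  intro j l
  by_cases hj : j = i <;> by_cases hl : l = i
  · simp [hj, hl, hu.1 i]
  · simp [hj, hl, Ne.symm hl, hπ.inner_apply_left']
  · simp [hj, hl, hπ.inner_apply_left_s19]
  · simp [hj, hl, hπ.inner_apply_apply, hu', hu.1 i, Ne.symm hj, Ne.symm hl]

end IsVectorProduct_s19

theorem injective_of_inner_pos {A : V →ₗ[ℝ] V} (hA : ∀ x, x ≠ 0 → 0 < ⟪A x, x⟫) :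
    Function.Injective A := by
  refine (injective_iff_map_eq_zero A).mpr fun x hx => ?_
  by_contra h
  simpa [hx] using hA x h

variable [FiniteDimensional ℝ V]

theorem LinearMap.IsSymmetric.eigenvalues_pos {A : V →ₗ[ℝ] V} (hA : A.IsSymmetric)
    (hApos : ∀ x, x ≠ 0 → 0 < ⟪A x, x⟫) {n : ℕ} (hn : finrank ℝ V = n) (i : Fin n) :
    0 < hA.eigenvalues hn i := by
  let u := hA.eigenvectorBasis hn
  simpa [u, real_inner_smul_left, u.orthonormal.1 i] using hApos _ (u.orthonormal.ne_zero i)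

theorem LinearMap.IsSymmetric.eq_of_comp_self_eq {A B : V →ₗ[ℝ] V} (hA : A.IsSymmetric)
    (hApos : ∀ x, x ≠ 0 → 0 < ⟪A x, x⟫) (hBpos : ∀ x, x ≠ 0 → 0 < ⟪B x, x⟫)
    (h : ∀ x, A (A x) = B (B x)) : A = B := by
  let u := hA.eigenvectorBasis rfl
  let a := hA.eigenvalues rfl
  have hAu : ∀ i, A (u i) = a i • u i := fun i => by simp [u, a]
  refine u.toBasis.ext fun i => ?_
  rw [OrthonormalBasis.coe_toBasis, hAu]
  have ha : 0 < a i := hA.eigenvalues_pos hApos rfl i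
  -- `w` lies in the `(-a i)`-eigenspace of the positive operator `B`, so it vanishes.
  set w := B (u i) - a i • u i
  have hBw : B w = -a i • w := by
    have hBB : B (B (u i)) = a i ^ 2 • u i := by rw [← h, hAu, map_smul, hAu, smul_smul, sq]
    simp only [w, map_sub, map_smul, hBB]
    module
  have hw : w = 0 := by
    by_contra hw
    have := hBpos w hw
    rw [hBw, real_inner_smul_left] at this
    nlinarith [real_inner_self_nonneg (x := w)]
  exact (sub_eq_zero.mp hw).symm

theorem eq_symm_apply_of_apply_eq {δ₁ δ₂ : V →ₗ[ℝ] V} (hδ₁ : δ₁.IsSymmetric)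
    (hδ₂ : δ₂.IsSymmetric) (hpos₁ : ∀ x, x ≠ 0 → 0 < ⟪δ₁ x, x⟫)
    (hpos₂ : ∀ x, x ≠ 0 → 0 < ⟪δ₂ x, x⟫) (σ : V ≃ₗᵢ[ℝ] V) {τ : V →ₗ[ℝ] V}
    (hτ : ∀ x y, ⟪τ x, τ y⟫ = ⟪x, y⟫) (h : ∀ x, δ₂ (σ x) = τ (δ₁ x)) (x : V) :
    δ₁ x = σ.symm (δ₂ (σ x)) := by
  let B := σ.symm.toLinearMap ∘ₗ δ₂ ∘ₗ σ.toLinearMap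
  have hB : ∀ x y, ⟪B x, y⟫ = ⟪δ₂ (σ x), σ y⟫ := fun x y => by
    simp [B, LinearIsometryEquiv.inner_map_eq_flip]
  have hBpos : ∀ x, x ≠ 0 → 0 < ⟪B x, x⟫ := fun x hx => by
    rw [hB]
    exact hpos₂ _ (by simpa using hx)
  have hsq : ∀ x, δ₁ (δ₁ x) = B (B x) := fun x => ext_inner_right ℝ fun y => by
    rw [hδ₁, ← hτ, ← h, ← h, hB, ← hδ₂]
    simp [B]
  exact congrArg (· x) (hδ₁.eq_of_comp_self_eq hpos₁ hBpos hsq)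

theorem exists_linearEquiv_apply_eq_and_inner_apply_map_map {π : V →ₗ[ℝ] V →ₗ[ℝ] V}
    {δ₁ δ₂ : V →ₗ[ℝ] V} (hδ₁ : δ₁.IsSymmetric) (hδ₂ : δ₂.IsSymmetric)
    (inj₁ : Function.Injective δ₁) (inj₂ : Function.Injective δ₂) (σ : V ≃ₗᵢ[ℝ] V)
    (hσ : ∀ x y, σ (δ₁ (π (δ₁ x) (δ₁ y))) = δ₂ (π (δ₂ (σ x)) (δ₂ (σ y)))) :
    ∃ E : V ≃ₗ[ℝ] V, (∀ x, δ₂ (σ x) = E (δ₁ x)) ∧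
      ∀ a b c, ⟪π (E a) (E b), E c⟫ = ⟪π a b, c⟫ := by
  let d₁ := LinearEquiv.ofInjectiveEndo δ₁ inj₁
  let E := d₁.symm ≪≫ₗ σ.toLinearEquiv ≪≫ₗ LinearEquiv.ofInjectiveEndo δ₂ inj₂
  have hEδ : ∀ x, δ₂ (σ x) = E (δ₁ x) := fun x =>
    congrArg (fun y => δ₂ (σ y)) (d₁.symm_apply_apply x).symm
  refine ⟨E, hEδ, fun a b c => ?_⟩
  obtain ⟨x, rfl⟩ := d₁.surjective a
  obtain ⟨y, rfl⟩ := d₁.surjective b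
  obtain ⟨z, rfl⟩ := d₁.surjective c
  rw [LinearEquiv.coe_ofInjectiveEndo, ← hEδ, ← hEδ, ← hEδ, ← hδ₂, ← hσ, σ.inner_map_map, hδ₁]

namespace IsVectorProduct_s19

variable {π : V →ₗ[ℝ] V →ₗ[ℝ] V} (hπ : IsVectorProduct_s19 π)
include hπ

-- `hER` says that `R = (E* E)⁻¹`.
theorem inner_map_map_of_inverse_gram (hdim : 3 < finrank ℝ V) {E R : V →ₗ[ℝ] V}
    (hR : R.IsSymmetric) (hER : ∀ x y, ⟪E x, E (R y)⟫ = ⟪x, y⟫)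
    (hπR : ∀ a b c, ⟪π a b, R (π a c)⟫ = ⟪π (E a) (E b), π (E a) (E c)⟫) (x y : V) :
    ⟪E x, E y⟫ = ⟪x, y⟫ := by
  have hRpos : ∀ x, x ≠ 0 → 0 < ⟪R x, x⟫ := fun x hx => by
    rw [← hER, real_inner_self_pos]
    intro h0
    have := hER x x
    rw [h0, inner_zero_right] at this
    exact hx (inner_self_eq_zero.mp this.symm)
  let u := hR.eigenvectorBasis rfl
  let μ := hR.eigenvalues rfl
  have hRu : ∀ i, R (u i) = μ i • u i := fun i => by simp [u, μ]
  have hμ : ∀ i, 0 < μ i := hR.eigenvalues_pos hRpos rfl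
  have hu := orthonormal_iff_ite.mp u.orthonormal
  have hEu : ∀ i j, ⟪E (u i), E (u j)⟫ = if i = j then (μ i)⁻¹ else 0 := fun i j => by
    have := hER (u i) (u j)
    rw [hRu, map_smul, real_inner_smul_right, hu] at this
    split_ifs at this ⊢ with hij
    · subst hij
      field_simp [(hμ i).ne']
      linarith
    · exact (mul_eq_zero.mp this).resolve_left (hμ j).ne'
  have hEn : ∀ i, ‖E (u i)‖ ^ 2 = (μ i)⁻¹ := fun i => by
    rw [← real_inner_self_eq_norm_sq, hEu, if_pos rfl]
  have : Nonempty (Fin (finrank ℝ V)) := ⟨⟨0, by omega⟩⟩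
  have hdet : R.det = ∏ i, μ i := by simpa using hR.det_eq_prod_eigenvalues rfl
  have hdet' : ∀ i, R.det = ∏ j, if j = i then μ i else (μ i * μ j)⁻¹ := fun i =>
    LinearMap.det_eq_prod_of_orthonormal (hπ.orthonormal_ite u.orthonormal i)
      (Fintype.card_fin _) R _ fun a b => by
        by_cases ha : a = i <;> by_cases hb : b = i
        · simp [ha, hb, hRu, real_inner_smul_right]
        · simp only [ha, hb, Ne.symm hb, ↓reduceIte]
          rw [← hR, hRu, real_inner_smul_left, hπ.inner_apply_left', mul_zero]
        · simp [ha, hb, hRu, real_inner_smul_right, hπ.inner_apply_left_s19]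
        · simp [ha, hb, hπR, hπ.inner_apply_apply, hEu, hEn, Ne.symm ha, Ne.symm hb, mul_comm]
  have hμ1 := eq_one_of_prod_eq_prod_ite (by simpa using hdim) hμ fun i => hdet ▸ hdet' i
  have hRid : R = LinearMap.id := u.toBasis.ext fun i => by simp [hRu, hμ1]
  simpa [hRid] using hER x y

theorem inner_map_map_of_inner_apply_map_map (hdim : 3 < finrank ℝ V) (E : V ≃ₗ[ℝ] V)
    (hE : ∀ a b c, ⟪π (E a) (E b), E c⟫ = ⟪π a b, c⟫) (x y : V) : ⟪E x, E y⟫ = ⟪x, y⟫ := by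
  let T := LinearMap.adjoint (E.symm : V →ₗ[ℝ] V)
  have hET : ∀ x y, ⟪E x, T y⟫ = ⟪x, y⟫ := fun x y => by
    rw [LinearMap.adjoint_inner_right, LinearEquiv.coe_coe, E.symm_apply_apply]
  have hT : ∀ a b, π (E a) (E b) = T (π a b) := fun a b => ext_inner_right ℝ fun v => by
    rw [← E.apply_symm_apply v, hE, real_inner_comm (E _), hET, real_inner_comm]
  refine hπ.inner_map_map_of_inverse_gram hdim T.isSymmetric_adjoint_comp_self
    (fun x y => ?_) (fun a b c => ?_) x y
  · simp [T, LinearMap.adjoint_adjoint, hET]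
  · rw [LinearMap.comp_apply, LinearMap.adjoint_inner_right]
    simp only [LinearEquiv.coe_coe, hT]

end IsVectorProduct_s19

end

theorem stmt19
    {V : Type*} [NormedAddCommGroup V] [InnerProductSpace ℝ V]
    [FiniteDimensional ℝ V] (hdim : Module.finrank ℝ V = 7)
    (π : V →ₗ[ℝ] V →ₗ[ℝ] V) (hπalt : ∀ x : V, π x x = 0)
    (hπvp : ∀ u v : V, Orthonormal ℝ ![u, v] → Orthonormal ℝ ![u, v, π u v])
    (δ₁ δ₂ : V →ₗ[ℝ] V)
    (hδ₁ : LinearMap.IsSymmetric δ₁) (hδ₂ : LinearMap.IsSymmetric δ₂)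
    (hpos₁ : ∀ x : V, x ≠ 0 → 0 < ⟪δ₁ x, x⟫)
    (hpos₂ : ∀ x : V, x ≠ 0 → 0 < ⟪δ₂ x, x⟫) :
    (∃ σ : V ≃ₗᵢ[ℝ] V, ∀ x y : V,
        σ (δ₁ (π (δ₁ x) (δ₁ y))) = δ₂ (π (δ₂ (σ x)) (δ₂ (σ y)))) ↔
    (∃ σ : V ≃ₗᵢ[ℝ] V, (∀ x y : V, σ (π x y) = π (σ x) (σ y)) ∧
        ∀ x : V, δ₁ x = σ.symm (δ₂ (σ x))) := by
  have hπ : IsVectorProduct_s19 π := ⟨hπalt, hπvp⟩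
  have inj₁ := injective_of_inner_pos hpos₁
  have inj₂ := injective_of_inner_pos hpos₂
  have surj₁ := LinearMap.injective_iff_surjective.mp inj₁
  constructor
  · rintro ⟨σ, hσ⟩
    obtain ⟨E, hEδ, hE⟩ :=
      exists_linearEquiv_apply_eq_and_inner_apply_map_map hδ₁ hδ₂ inj₁ inj₂ σ hσ
    have hconj := eq_symm_apply_of_apply_eq hδ₁ hδ₂ hpos₁ hpos₂ σ (τ := E)
      (hπ.inner_map_map_of_inner_apply_map_map (by omega) E hE) hEδ
    have hσδ : ∀ z, σ (δ₁ z) = δ₂ (σ z) := fun z => by rw [hconj, σ.apply_symm_apply]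
    refine ⟨σ, fun a b => ?_, hconj⟩
    obtain ⟨x, rfl⟩ := surj₁ a
    obtain ⟨y, rfl⟩ := surj₁ b
    apply inj₂
    rw [← hσδ, hσ, hσδ, hσδ]
  · rintro ⟨σ, hπσ, hconj⟩
    have hσδ : ∀ z, σ (δ₁ z) = δ₂ (σ z) := fun z => by rw [hconj, σ.apply_symm_apply]
    exact ⟨σ, fun x y => by rw [hσδ, hπσ, hσδ, hσδ]⟩
end
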